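/- arXiv:0705.0967 — 4 statements merged into one kernel-verified Lean document; each statement's English description precedes it below -/
import Mathlib

section
/- Let U be an ultrametric arrangement on I and define the relation i ⪯ j by U_{ij} = U_{ii}. Then i ⪯ j holds if and only if U_{ik} ≤ U_{jk} for all k ∈ I. In particular ⪯ is reflexive and transitive (a preorder). -/
/-- The relation `i ⪯ j ↔ U i j = U i i` is characterized by pointwise domination of
rows, and is a preorder (reflexive and transitive). -/
theorem stmt3 {I : Type*} (U : I → I → ℝ)
    (hsymm : ∀ i j, U i j = U j i)
    (hultra : ∀ i j k, U i j ≥ min (U i k) (U k j)) :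
    (∀ i j : I, (U i j = U i i ↔ ∀ k, U i k ≤ U j k)) ∧
    Reflexive (fun i j : I => U i j = U i i) ∧
    Transitive (fun i j : I => U i j = U i i) := by
  have hdiag : ∀ i k, U i k ≤ U i i := by
    intro i k
    have h := hultra i i k
    rw [hsymm k i, min_self] at h
    exact h
  have hchar : ∀ i j : I, (U i j = U i i ↔ ∀ k, U i k ≤ U j k) := by
    intro i j
    constructor
    · intro h k
      have h2 := hultra j k i
      have : min (U j i) (U i k) = U i k := by
        rw [hsymm j i, h, min_eq_right (hdiag i k)]
      rw [this] at h2
      exact h2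
    · intro h
      have h1 : U i i ≤ U j i := h i
      have h2 : U i j ≤ U i i := hdiag i j
      rw [hsymm j i] at h1
      linarith
  refine ⟨hchar, fun i => rfl, fun i j l hij hjl => ?_⟩
  simp only [] at hij hjl ⊢
  rw [hchar] at hij hjl ⊢
  exact fun k => le_trans (hij k) (hjl k)
end

section
/- Let U be an ultrametric arrangement on I. For w, w' ∈ ℝ let E^w and E^{w'} be equivalence classes of ≡_w on J(w) and of ≡_{w'} on J(w') respectively. If E^{w'} ⊄ E^w and E^w ⊄ E^{w'}, then for all k, k' ∈ E^w and all ℓ, ℓ' ∈ E^{w'} one has U_{kℓ} = U_{k'ℓ'} < min(w, w'), and E^w ∩ E^{w'} = ∅. -/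
/-- If two equivalence classes `E^w` and `E^{w'}` (of the relations `≡_w`, `≡_{w'}` on
`J(w)`, `J(w')`) are mutually non-included, then all cross values `U k ℓ` coincide and
are `< min w w'`, and the classes are disjoint. -/
theorem stmt8 {I : Type*} (U : I → I → ℝ)
    (hsymm : ∀ i j, U i j = U j i)
    (hultra : ∀ i j k, U i j ≥ min (U i k) (U k j))
    (w w' : ℝ) (E E' : Set I)
    (hE : ∃ i, w ≤ U i i ∧ E = {j | w ≤ U j j ∧ w ≤ U i j})
    (hE' : ∃ i, w' ≤ U i i ∧ E' = {j | w' ≤ U j j ∧ w' ≤ U i j})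
    (h1 : ¬ E' ⊆ E) (h2 : ¬ E ⊆ E') :
    (∀ k ∈ E, ∀ k' ∈ E, ∀ l ∈ E', ∀ l' ∈ E',
      U k l = U k' l' ∧ U k l < min w w') ∧ E ∩ E' = ∅ := by
  obtain ⟨i, hii, rfl⟩ := hE
  obtain ⟨i', hii', rfl⟩ := hE'
  -- within-class bounds
  have hEw : ∀ k ∈ {j | w ≤ U j j ∧ w ≤ U i j}, ∀ k' ∈ {j | w ≤ U j j ∧ w ≤ U i j},
      w ≤ U k k' := by
    intro k hk k' hk'
    have hki : w ≤ U k i := by rw [hsymm k i]; exact hk.2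
    exact le_trans (le_min hki hk'.2) (hultra k k' i)
  have hE'w : ∀ l ∈ {j | w' ≤ U j j ∧ w' ≤ U i' j}, ∀ l' ∈ {j | w' ≤ U j j ∧ w' ≤ U i' j},
      w' ≤ U l l' := by
    intro l hl l' hl'
    have hli : w' ≤ U l i' := by rw [hsymm l i']; exact hl.2
    exact le_trans (le_min hli hl'.2) (hultra l l' i')
  -- all cross values are < min w w'
  have cross : ∀ k ∈ {j | w ≤ U j j ∧ w ≤ U i j}, ∀ l ∈ {j | w' ≤ U j j ∧ w' ≤ U i' j},
      U k l < min w w' := by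
    intro k hk l hl
    by_contra hc
    push_neg at hc
    rcases le_total w w' with hww | hww
    · apply h1
      intro l' hl'
      have hll' : w' ≤ U l l' := hE'w l hl l' hl'
      have hkl : w ≤ U k l := le_trans (le_min le_rfl hww) hc
      have hkl' : w ≤ U k l' :=
        le_trans (le_min hkl (le_trans hww hll')) (hultra k l' l)
      have hil' : w ≤ U i l' :=
        le_trans (le_min hk.2 hkl') (hultra i l' k)
      exact ⟨le_trans hww hl'.1, hil'⟩
    · apply h2
      intro k' hk'
      have hkk' : w ≤ U k k' := hEw k hk k' hk'
      have hlk : w' ≤ U l k := by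
        rw [hsymm l k]; exact le_trans (le_min hww le_rfl) hc
      have hlk' : w' ≤ U l k' :=
        le_trans (le_min hlk (le_trans hww hkk')) (hultra l k' k)
      have hi'k' : w' ≤ U i' k' :=
        le_trans (le_min hl.2 hlk') (hultra i' k' l)
      exact ⟨le_trans hww hk'.1, hi'k'⟩
  constructor
  · intro k hk k' hk' l hl l' hl'
    have key : ∀ a ∈ {j | w ≤ U j j ∧ w ≤ U i j}, ∀ b ∈ {j | w ≤ U j j ∧ w ≤ U i j},
        ∀ c ∈ {j | w' ≤ U j j ∧ w' ≤ U i' j}, ∀ d ∈ {j | w' ≤ U j j ∧ w' ≤ U i' j},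
        U a c ≤ U b d := by
      intro a ha b hb c hc d hd
      have hac : U a c < min w w' := cross a ha c hc
      have h1' : U a c ≤ U a d := by
        have := hultra a d c
        have hcd : w' ≤ U c d := hE'w c hc d hd
        have : min (U a c) (U c d) ≤ U a d := this
        rw [min_eq_left (le_trans (le_of_lt (lt_of_lt_of_le hac (min_le_right _ _))) hcd)] at this
        exact this
      have had : U a d < min w w' := cross a ha d hd
      have h2' : U a d ≤ U b d := by
        have hba : w ≤ U b a := hEw b hb a ha
        have h := hultra b d a
        rw [min_eq_right (le_trans (le_of_lt (lt_of_lt_of_le had (min_le_left _ _))) hba)] at h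
        exact h
      exact le_trans h1' h2'
    exact ⟨le_antisymm (key k hk k' hk' l hl l' hl') (key k' hk' k hk l' hl' l hl),
      cross k hk l hl⟩
  · ext j
    simp only [Set.mem_inter_iff, Set.mem_empty_iff_false, iff_false]
    rintro ⟨hj, hj'⟩
    have hlt := lt_min_iff.mp (cross j hj j hj')
    linarith [hj.1, hlt.1]
end

section
/- Let (I, 𝒯) be a locally finite rooted tree with root r, let w : ℕ → ℝ be strictly positive and strictly increasing, and let U be the tree matrix U_{ij} = w_{|i∧j|}. Define the symmetric q-matrix Q supported on the tree and the diagonal by Q_{i i⁻} = Q_{i⁻ i} = (w_{|i|} − w_{|i|−1})^{−1} for i ≠ r, and Q_{ii} = −((w_{|i|} − w_{|i|−1})^{−1} + |S_i| (w_{|i|+1} − w_{|i|})^{−1}) (with w_{−1} = 0), where S_i is the set of successors of i. Then (−Q)U = U(−Q) = I, the identity matrix on I. -/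
open scoped Classical

/-- On a locally finite rooted tree with strictly positive strictly increasing level
function `w`, the tree matrix `U i j = w (lvl (i ∧ j))` and the associated symmetric
`q`-matrix `Q` satisfy `(-Q) U = U (-Q) = I`. -/
theorem stmt9 {I : Type*} (r : I) (parent : I → I) (lvl : I → ℕ)
    (meet : I → I → I) (anc : I → I → Prop)
    (w : ℕ → ℝ) (Δ : ℕ → ℝ) (U Q : I → I → ℝ)
    (hw_pos : ∀ n, 0 < w n) (hw_mono : StrictMono w)
    (h_lvl_r : lvl r = 0) (h_parent_r : parent r = r)
    (h_lvl : ∀ i, i ≠ r → lvl i = lvl (parent i) + 1)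
    (h_anc : ∀ i j, anc i j ↔ ∃ n, parent^[n] j = i)
    (h_meet_left : ∀ i j, anc (meet i j) i)
    (h_meet_right : ∀ i j, anc (meet i j) j)
    (h_meet_max : ∀ i j k, anc k i → anc k j → anc k (meet i j))
    (h_locfin : ∀ i, {j | parent j = i ∧ j ≠ r}.Finite)
    (hΔ : ∀ n, Δ n = w n - (if n = 0 then 0 else w (n - 1)))
    (hU : ∀ i j, U i j = w (lvl (meet i j)))
    (hQ_diag : ∀ i, Q i i =
      -((Δ (lvl i))⁻¹ + (Nat.card {j | parent j = i ∧ j ≠ r} : ℝ) * (Δ (lvl i + 1))⁻¹))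
    (hQ_up : ∀ i, i ≠ r → Q i (parent i) = (Δ (lvl i))⁻¹)
    (hQ_down : ∀ i j, parent j = i → j ≠ r → Q i j = (Δ (lvl j))⁻¹)
    (hQ_zero : ∀ i j, i ≠ j → ¬ (parent i = j ∧ i ≠ r) → ¬ (parent j = i ∧ j ≠ r) →
      Q i j = 0) :
    (∀ i k, ∑ᶠ j, (-Q i j) * U j k = if i = k then 1 else 0) ∧
    (∀ i k, ∑ᶠ j, U i j * (-Q j k) = if i = k then 1 else 0) := by
  classical
  -- basic level facts
  have lvl_zero : ∀ i, lvl i = 0 → i = r := by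
    intro i h
    by_contra hi
    have := h_lvl i hi
    omega
  have iter_root : ∀ n i, lvl i ≤ n → parent^[n] i = r := by
    intro n
    induction n with
    | zero => intro i h; exact lvl_zero i (Nat.le_zero.mp h)
    | succ n ih =>
      intro i h
      rw [Function.iterate_succ_apply]
      by_cases hi : i = r
      · rw [hi, h_parent_r]; exact ih r (by rw [h_lvl_r]; omega)
      · exact ih (parent i) (by have := h_lvl i hi; omega)
  have lvl_iter : ∀ n i, lvl (parent^[n] i) = lvl i - n := by
    intro n
    induction n with
    | zero => simp
    | succ n ih =>
      intro i
      rw [Function.iterate_succ_apply]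
      by_cases hi : i = r
      · rw [hi, h_parent_r, ih, h_lvl_r]; omega
      · rw [ih]; have := h_lvl i hi; omega
  have anc_refl : ∀ i, anc i i := fun i => (h_anc i i).mpr ⟨0, rfl⟩
  have anc_root : ∀ i, anc r i := fun i =>
    (h_anc r i).mpr ⟨lvl i, iter_root _ _ le_rfl⟩
  have anc_lvl : ∀ i j, anc i j → lvl i ≤ lvl j := by
    intro i j h
    obtain ⟨n, hn⟩ := (h_anc i j).mp h
    have := lvl_iter n j
    rw [hn] at this
    omega
  have iter_unique : ∀ (k : I) (a b : ℕ), lvl (parent^[a] k) = lvl (parent^[b] k) →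
      parent^[a] k = parent^[b] k := by
    intro k a b h
    have h1 := lvl_iter a k
    have h2 := lvl_iter b k
    rcases le_or_gt a (lvl k) with ha | ha
    · rcases le_or_gt b (lvl k) with hb | hb
      · have : a = b := by omega
        rw [this]
      · have hbr : parent^[b] k = r := iter_root b k (by omega)
        rw [hbr, h_lvl_r] at h
        rw [hbr]
        exact iter_root a k (by omega)
    · have har : parent^[a] k = r := iter_root a k (by omega)
      rw [har, h_lvl_r] at h
      rw [har]
      exact (iter_root b k (by omega)).symm
  have anc_antisymm : ∀ i j, anc i j → anc j i → i = j := by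
    intro i j hij hji
    obtain ⟨n, hn⟩ := (h_anc i j).mp hij
    have h1 := anc_lvl i j hij
    have h2 := anc_lvl j i hji
    have h3 : lvl (parent^[n] j) = lvl (parent^[0] j) := by
      rw [hn]; simpa using by omega
    have h4 := iter_unique j n 0 h3
    rw [hn] at h4
    simpa using h4
  have anc_trans : ∀ i j k, anc i j → anc j k → anc i k := by
    intro i j k h1 h2
    obtain ⟨n, hn⟩ := (h_anc i j).mp h1
    obtain ⟨m, hm⟩ := (h_anc j k).mp h2
    exact (h_anc i k).mpr ⟨n + m, by rw [Function.iterate_add_apply, hm, hn]⟩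
  have anc_parent : ∀ i, anc (parent i) i := fun i => (h_anc _ i).mpr ⟨1, rfl⟩
  have anc_parent_of_ne : ∀ m i, anc m i → m ≠ i → anc m (parent i) := by
    intro m i h hne
    obtain ⟨n, hn⟩ := (h_anc m i).mp h
    match n, hn with
    | 0, hn => exact absurd hn.symm hne
    | n+1, hn =>
      exact (h_anc m (parent i)).mpr ⟨n, by rw [← Function.iterate_succ_apply]; exact hn⟩
  have meet_eq_left : ∀ i k, anc i k → meet i k = i := fun i k h =>
    anc_antisymm _ _ (h_meet_left i k) (h_meet_max i k i (anc_refl i) h)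
  have meet_comm : ∀ i k, meet i k = meet k i := fun i k =>
    anc_antisymm _ _ (h_meet_max k i (meet i k) (h_meet_right i k) (h_meet_left i k))
      (h_meet_max i k (meet k i) (h_meet_right k i) (h_meet_left k i))
  -- Δ facts
  have hΔ_pos : ∀ n, 0 < Δ n := by
    intro n
    rw [hΔ n]
    rcases Nat.eq_zero_or_pos n with h | h
    · simp [h]; exact hw_pos 0
    · rw [if_neg (by omega)]
      have := hw_mono (show n - 1 < n by omega)
      linarith
  have hΔ_ne : ∀ n, Δ n ≠ 0 := fun n => (hΔ_pos n).ne'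
  -- the first identity
  have key : ∀ i k, ∑ᶠ j, (-Q i j) * U j k = if i = k then 1 else 0 := by
    intro i k
    set C : Finset I := (h_locfin i).toFinset with hC
    have hC_mem : ∀ j, j ∈ C ↔ parent j = i ∧ j ≠ r := by
      intro j; rw [hC, Set.Finite.mem_toFinset]; rfl
    have hcard : (Nat.card {j | parent j = i ∧ j ≠ r} : ℝ) = (C.card : ℝ) := by
      rw [Nat.card_coe_set_eq, Set.ncard_eq_toFinset_card _ (h_locfin i)]
    have hiC : i ∉ C := by
      intro h
      obtain ⟨h1, h2⟩ := (hC_mem i).mp h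
      have := h_lvl i h2
      rw [h1] at this
      omega
    have hpC : parent i ∉ C := by
      intro h
      obtain ⟨h1, h2⟩ := (hC_mem (parent i)).mp h
      by_cases hi : i = r
      · exact h2 (by rw [hi, h_parent_r])
      · have e1 := h_lvl i hi
        have e2 := h_lvl (parent i) h2
        rw [h1] at e2
        omega
    have hlvlC : ∀ j ∈ C, lvl j = lvl i + 1 := by
      intro j hj
      obtain ⟨h1, h2⟩ := (hC_mem j).mp hj
      rw [h_lvl j h2, h1]
    have hQC : ∀ j ∈ C, Q i j = (Δ (lvl i + 1))⁻¹ := by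
      intro j hj
      obtain ⟨h1, h2⟩ := (hC_mem j).mp hj
      rw [hQ_down i j h1 h2, hlvlC j hj]
    set T : Finset I := insert i (insert (parent i) C) with hT
    have hsupp : (Function.support fun j => (-Q i j) * U j k) ⊆ ↑T := by
      intro j hj
      simp only [Function.mem_support] at hj
      by_contra hjT
      apply hj
      simp only [hT, Finset.coe_insert, Set.mem_insert_iff, Finset.mem_coe, not_or] at hjT
      obtain ⟨hj1, hj2, hj3⟩ := hjT
      have : Q i j = 0 := by
        apply hQ_zero i j (fun h => hj1 h.symm)
        · intro ⟨h1, _⟩; exact hj2 h1.symm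
        · intro h; exact hj3 ((hC_mem j).mpr h)
      rw [this, neg_zero, zero_mul]
    rw [finsum_eq_sum_of_support_subset _ hsupp]
    by_cases hanc : anc i k
    · -- i is an ancestor of k
      have hmik : meet i k = i := meet_eq_left i k hanc
      by_cases hik : i = k
      · -- diagonal entry
        subst hik
        rw [if_pos rfl]
        have hUik : U i i = w (lvl i) := by rw [hU, hmik]
        have hUC : ∀ j ∈ C, U j i = w (lvl i) := by
          intro j hj
          obtain ⟨h1, h2⟩ := (hC_mem j).mp hj
          have hanc_ij : anc i j := by rw [← h1]; exact anc_parent j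
          rw [hU, meet_comm, meet_eq_left i j hanc_ij]
        by_cases hir : i = r
        · have hTr : T = insert i C := by
            rw [hT, hir, h_parent_r, Finset.insert_idem]
          rw [hTr, Finset.sum_insert hiC]
          have : ∑ j ∈ C, (-Q i j) * U j i = (C.card : ℝ) * ((-(Δ (lvl i + 1))⁻¹) * w (lvl i)) := by
            rw [Finset.sum_congr rfl fun j hj => by rw [hQC j hj, hUC j hj]]
            rw [Finset.sum_const, nsmul_eq_mul]
          rw [this, hUik, hQ_diag i, hcard]
          have h0 : lvl i = 0 := by rw [hir, h_lvl_r]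
          rw [h0]
          rw [hΔ 0, if_pos rfl, sub_zero]
          have hw0 : w 0 ≠ 0 := (hw_pos 0).ne'
          field_simp
          ring
        · have hpi : parent i ≠ i := by
            intro h
            have := h_lvl i hir
            rw [h] at this
            omega
          have hiT : i ∉ insert (parent i) C := by
            simp only [Finset.mem_insert, not_or]
            exact ⟨fun h => hpi h.symm, hiC⟩
          rw [hT, Finset.sum_insert hiT, Finset.sum_insert hpC]
          have hUp : U (parent i) i = w (lvl (parent i)) := by
            rw [hU, meet_eq_left _ _ (anc_parent i)]
          have : ∑ j ∈ C, (-Q i j) * U j i = (C.card : ℝ) * ((-(Δ (lvl i + 1))⁻¹) * w (lvl i)) := by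
            rw [Finset.sum_congr rfl fun j hj => by rw [hQC j hj, hUC j hj]]
            rw [Finset.sum_const, nsmul_eq_mul]
          rw [this, hUik, hUp, hQ_diag i, hQ_up i hir, hcard]
          have hl : lvl i = lvl (parent i) + 1 := h_lvl i hir
          rw [hΔ (lvl i), if_neg (by omega)]
          have hlp : lvl i - 1 = lvl (parent i) := by omega
          rw [hlp]
          have hne1 : w (lvl i) - w (lvl (parent i)) ≠ 0 := by
            have := hw_mono (show lvl (parent i) < lvl i by omega)
            linarith
          have hne2 : Δ (lvl i + 1) ≠ 0 := hΔ_ne _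
          field_simp
          ring
      · -- anc i k, i ≠ k : off-diagonal, result 0
        rw [if_neg hik]
        -- find the child j0 of i on the path to k
        have hlvl_lt : lvl i < lvl k := by
          have h1 := anc_lvl i k hanc
          rcases lt_or_eq_of_le h1 with h | h
          · exact h
          · exfalso
            obtain ⟨n, hn⟩ := (h_anc i k).mp hanc
            have : lvl (parent^[n] k) = lvl (parent^[0] k) := by
              rw [hn]; simpa using h
            have := iter_unique k n 0 this
            rw [hn] at this
            exact hik (by simpa using this)
        set d : ℕ := lvl k - lvl i with hd
        have hd1 : 1 ≤ d := by omega
        have hdk : parent^[d] k = i := by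
          obtain ⟨n, hn⟩ := (h_anc i k).mp hanc
          have h1 := lvl_iter n k
          rw [hn] at h1
          have h2 : lvl (parent^[d] k) = lvl (parent^[n] k) := by
            rw [hn, lvl_iter]; omega
          have := iter_unique k d n h2
          rw [hn] at this
          exact this
        set j0 : I := parent^[d - 1] k with hj0
        have hlvlj0 : lvl j0 = lvl i + 1 := by
          rw [hj0, lvl_iter]; omega
        have hpj0 : parent j0 = i := by
          have h := Function.iterate_succ_apply' parent (d - 1) k
          rw [show (d - 1).succ = d by omega] at h
          rw [hj0, ← h]
          exact hdk
        have hj0r : j0 ≠ r := by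
          intro h
          rw [h, h_lvl_r] at hlvlj0
          omega
        have hj0C : j0 ∈ C := (hC_mem j0).mpr ⟨hpj0, hj0r⟩
        have hancj0 : anc j0 k := (h_anc j0 k).mpr ⟨d - 1, rfl⟩
        have hUj0 : U j0 k = w (lvl i + 1) := by
          rw [hU, meet_eq_left j0 k hancj0, hlvlj0]
        have hUik : U i k = w (lvl i) := by rw [hU, hmik]
        have hUC : ∀ j ∈ C, j ≠ j0 → U j k = w (lvl i) := by
          intro j hj hjne
          obtain ⟨h1, h2⟩ := (hC_mem j).mp hj
          have hanc_ij : anc i j := by rw [← h1]; exact anc_parent j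
          have hmjk : meet j k = i := by
            apply anc_antisymm
            · -- anc (meet j k) i
              have hne : meet j k ≠ j := by
                intro h
                -- then anc j k, so j = j0
                have hancjk : anc j k := by rw [← h]; exact h_meet_right j k
                obtain ⟨m, hm⟩ := (h_anc j k).mp hancjk
                have : lvl (parent^[m] k) = lvl (parent^[d-1] k) := by
                  rw [hm, hlvlC j hj, lvl_iter]; omega
                have := iter_unique k m (d-1) this
                rw [hm] at this
                exact hjne (this.trans rfl)
              have := anc_parent_of_ne (meet j k) j (h_meet_left j k) hne
              rwa [h1] at this
            · exact h_meet_max j k i hanc_ij hanc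
          rw [hU, hmjk]
        have hsplit : ∑ j ∈ C, (-Q i j) * U j k
            = (-(Δ (lvl i + 1))⁻¹) * w (lvl i + 1)
              + ((C.card : ℝ) - 1) * ((-(Δ (lvl i + 1))⁻¹) * w (lvl i)) := by
          rw [← Finset.sum_erase_add _ _ hj0C, add_comm]
          congr 1
          · rw [hQC j0 hj0C, hUj0]
          · rw [Finset.sum_congr rfl fun j hj => by
              rw [hQC j (Finset.mem_of_mem_erase hj),
                hUC j (Finset.mem_of_mem_erase hj) (Finset.ne_of_mem_erase hj)]]
            rw [Finset.sum_const, nsmul_eq_mul, Finset.card_erase_of_mem hj0C]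
            have : 1 ≤ C.card := Finset.card_pos.mpr ⟨j0, hj0C⟩
            push_cast [Nat.cast_sub this]
            ring
        by_cases hir : i = r
        · have hTr : T = insert i C := by
            rw [hT, hir, h_parent_r, Finset.insert_idem]
          rw [hTr, Finset.sum_insert hiC, hsplit, hUik, hQ_diag i, hcard]
          have h0 : lvl i = 0 := by rw [hir, h_lvl_r]
          rw [h0]
          rw [hΔ 0, if_pos rfl, sub_zero, hΔ 1, if_neg one_ne_zero]
          have hw0 : w 0 ≠ 0 := (hw_pos 0).ne'
          have hne1 : w 1 - w (1 - 1) ≠ 0 := by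
            have := hw_mono (show 0 < 1 by omega)
            simp only [Nat.sub_self]
            linarith
          simp only [Nat.sub_self] at hne1 ⊢
          field_simp
          ring
        · have hpi : parent i ≠ i := by
            intro h
            have := h_lvl i hir
            rw [h] at this
            omega
          have hiT : i ∉ insert (parent i) C := by
            simp only [Finset.mem_insert, not_or]
            exact ⟨fun h => hpi h.symm, hiC⟩
          rw [hT, Finset.sum_insert hiT, Finset.sum_insert hpC, hsplit]
          have hUp : U (parent i) k = w (lvl (parent i)) := by
            rw [hU, meet_eq_left _ _ (anc_trans _ _ _ (anc_parent i) hanc)]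
          rw [hUik, hUp, hQ_diag i, hQ_up i hir, hcard]
          have hl : lvl i = lvl (parent i) + 1 := h_lvl i hir
          rw [hΔ (lvl i), if_neg (by omega), hΔ (lvl i + 1), if_neg (by omega)]
          have hlp : lvl i - 1 = lvl (parent i) := by omega
          have hlp2 : lvl i + 1 - 1 = lvl i := by omega
          rw [hlp, hlp2]
          have hne1 : w (lvl i) - w (lvl (parent i)) ≠ 0 := by
            have := hw_mono (show lvl (parent i) < lvl i by omega)
            linarith
          have hne2 : w (lvl i + 1) - w (lvl i) ≠ 0 := by
            have := hw_mono (show lvl i < lvl i + 1 by omega)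
            linarith
          field_simp
          ring
    · -- i is not an ancestor of k : row sums to zero against constant U column
      have hik : i ≠ k := fun h => hanc (h ▸ anc_refl i)
      rw [if_neg hik]
      have hir : i ≠ r := fun h => hanc (h ▸ anc_root k)
      -- U is constant = w (lvl (meet i k)) on all of T
      set m : I := meet i k with hm
      have hmne : m ≠ i := by
        intro h
        apply hanc
        have := h_meet_right i k
        rwa [← hm, h] at this
      have hUi : U i k = w (lvl m) := by rw [hU]
      have hUp : U (parent i) k = w (lvl m) := by
        have h1 : anc m (parent i) :=
          anc_parent_of_ne m i (h_meet_left i k) hmne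
        have heq : meet (parent i) k = m := by
          apply anc_antisymm
          · -- anc (meet (parent i) k) m
            apply h_meet_max
            · exact anc_trans _ _ _ (h_meet_left (parent i) k) (anc_parent i)
            · exact h_meet_right (parent i) k
          · exact h_meet_max _ _ _ h1 (h_meet_right i k)
        rw [hU, heq]
      have hUC : ∀ j ∈ C, U j k = w (lvl m) := by
        intro j hj
        obtain ⟨h1, h2⟩ := (hC_mem j).mp hj
        have hanc_ij : anc i j := by rw [← h1]; exact anc_parent j
        have heq : meet j k = m := by
          apply anc_antisymm
          · apply h_meet_max
            · have hne : meet j k ≠ j := by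
                intro h
                apply hanc
                have hjk : anc j k := by rw [← h]; exact h_meet_right j k
                exact anc_trans _ _ _ hanc_ij hjk
              have := anc_parent_of_ne (meet j k) j (h_meet_left j k) hne
              rwa [h1] at this
            · exact h_meet_right j k
          · exact h_meet_max j k m
              (anc_trans _ _ _ (h_meet_left i k) hanc_ij) (h_meet_right i k)
        rw [hU, heq]
      have hpi : parent i ≠ i := by
        intro h
        have := h_lvl i hir
        rw [h] at this
        omega
      have hiT : i ∉ insert (parent i) C := by
        simp only [Finset.mem_insert, not_or]
        exact ⟨fun h => hpi h.symm, hiC⟩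
      rw [hT, Finset.sum_insert hiT, Finset.sum_insert hpC]
      have : ∑ j ∈ C, (-Q i j) * U j k = (C.card : ℝ) * ((-(Δ (lvl i + 1))⁻¹) * w (lvl m)) := by
        rw [Finset.sum_congr rfl fun j hj => by rw [hQC j hj, hUC j hj]]
        rw [Finset.sum_const, nsmul_eq_mul]
      rw [this, hUi, hUp, hQ_diag i, hQ_up i hir, hcard]
      ring
  refine ⟨key, ?_⟩
  -- symmetry of Q and U, then reuse `key`
  have hQsymm : ∀ a b, Q a b = Q b a := by
    intro a b
    by_cases hab : a = b
    · rw [hab]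
    · by_cases h1 : parent a = b ∧ a ≠ r
      · rw [← h1.1, hQ_up a h1.2, hQ_down (parent a) a rfl h1.2]
      · by_cases h2 : parent b = a ∧ b ≠ r
        · rw [← h2.1, hQ_up b h2.2, hQ_down (parent b) b rfl h2.2]
        · rw [hQ_zero a b hab h1 h2, hQ_zero b a (Ne.symm hab) h2 h1]
  have hUsymm : ∀ a b, U a b = U b a := by
    intro a b
    rw [hU, hU, anc_antisymm _ _
      (h_meet_max b a (meet a b) (h_meet_right a b) (h_meet_left a b))
      (h_meet_max a b (meet b a) (h_meet_right b a) (h_meet_left b a))]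
  intro i k
  have : (∑ᶠ j, U i j * (-Q j k)) = ∑ᶠ j, (-Q k j) * U j i := by
    apply finsum_congr
    intro j
    rw [hUsymm i j, hQsymm j k]
    ring
  rw [this, key k i]
  by_cases h : i = k
  · rw [if_pos h, if_pos h.symm]
  · rw [if_neg h, if_neg (Ne.symm h)]
end

section
/- Let 0 < λ₀ < λ₁, and let Θ₁, Θ₀, B be independent random variables with Θ₁ ~ Exp(λ₁), Θ₀ ~ Exp(λ₀), and B Bernoulli with P(B=1) = 1 − λ₀/λ₁. Then the random variable Γ₀ = Θ₁ + B·Θ₀ is exponentially distributed with rate λ₀. -/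
open MeasureTheory Filter

section Helpers
open Set Real ProbabilityTheory
open scoped ENNReal

lemma expMeasure_Ioi {r : ℝ} (hr : 0 < r) (t : ℝ) :
    expMeasure r (Ioi t) = ENNReal.ofReal (Real.exp (-(r * max t 0))) := by
  have hprob : IsProbabilityMeasure (expMeasure r) := isProbabilityMeasure_expMeasure hr
  have hIic : expMeasure r (Iic t)
      = ENNReal.ofReal (if 0 ≤ t then 1 - Real.exp (-(r * t)) else 0) := by
    rw [expMeasure, gammaMeasure, withDensity_apply _ measurableSet_Iic]
    exact lintegral_exponentialPDF_eq_antiDeriv hr t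
  have h2 : expMeasure r (Ioi t) = 1 - expMeasure r (Iic t) := by
    rw [← compl_Iic, measure_compl measurableSet_Iic (measure_ne_top _ _), measure_univ]
  rw [h2, hIic]
  rcases le_or_gt 0 t with ht | ht
  · rw [if_pos ht, max_eq_left ht]
    have he : Real.exp (-(r * t)) ≤ 1 := by
      rw [Real.exp_le_one_iff]; nlinarith
    have : ENNReal.ofReal (1 - Real.exp (-(r * t))) + ENNReal.ofReal (Real.exp (-(r * t))) = 1 := by
      rw [← ENNReal.ofReal_add (by linarith) (Real.exp_nonneg _)]
      simp
    rw [← this]; simp [ENNReal.add_sub_cancel_left]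
  · rw [if_neg (not_le.mpr ht), max_eq_right ht.le]
    simp

lemma map_eq_expMeasure {Ω : Type*} [MeasurableSpace Ω] (μ : Measure Ω)
    [IsProbabilityMeasure μ] {r : ℝ} (hr : 0 < r) {X : Ω → ℝ} (hX : Measurable X)
    (hlaw : ∀ t : ℝ, 0 ≤ t → μ {ω | X ω > t} = ENNReal.ofReal (Real.exp (-r * t))) :
    μ.map X = expMeasure r := by
  have hprob : IsProbabilityMeasure (expMeasure r) := isProbabilityMeasure_expMeasure hr
  have hmap : IsProbabilityMeasure (μ.map X) := Measure.isProbabilityMeasure_map hX.aemeasurable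
  have htail : ∀ t : ℝ, μ.map X (Ioi t) = expMeasure r (Ioi t) := by
    intro t
    rw [Measure.map_apply hX measurableSet_Ioi, expMeasure_Ioi hr]
    rcases le_or_gt 0 t with ht | ht
    · rw [max_eq_left ht, ← neg_mul]
      exact hlaw t ht
    · rw [max_eq_right ht.le, mul_zero, neg_zero, Real.exp_zero, ENNReal.ofReal_one]
      refine le_antisymm prob_le_one ?_
      have h0 : μ (X ⁻¹' Ioi 0) = 1 := by
        have := hlaw 0 le_rfl
        simp at this; exact this
      calc (1:ℝ≥0∞) = μ (X ⁻¹' Ioi 0) := h0.symm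
        _ ≤ μ (X ⁻¹' Ioi t) := measure_mono (preimage_mono (Ioi_subset_Ioi ht.le))
  refine ext_of_generate_finite (range Ioi) ?_ isPiSystem_Ioi ?_ (by simp)
  · exact BorelSpace.measurable_eq.trans (borel_eq_generateFrom_Ioi ℝ)
  · rintro s ⟨t, rfl⟩
    exact htail t
lemma integral_exp_mul' (c : ℝ) (hc : c ≠ 0) (a b : ℝ) :
    ∫ x in a..b, Real.exp (c * x) = (Real.exp (c * b) - Real.exp (c * a)) / c := by
  have hderiv : ∀ x ∈ Set.uIcc a b, HasDerivAt (fun x => Real.exp (c * x) / c)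
      (Real.exp (c * x)) x := by
    intro x _
    have h1 : HasDerivAt (fun x : ℝ => c * x) c x := by
      simpa using (hasDerivAt_id x).const_mul c
    have h2 := (Real.hasDerivAt_exp (c * x)).comp x h1
    have h3 := h2.div_const c
    rw [mul_div_assoc, div_self hc, mul_one] at h3
    exact h3
  rw [intervalIntegral.integral_eq_sub_of_hasDerivAt hderiv
    (Continuous.intervalIntegrable (by continuity) a b)]
  ring

lemma conv_tail {lam₀ lam₁ : ℝ} (h0 : 0 < lam₀) (h1 : lam₀ < lam₁) {t : ℝ} (ht : 0 ≤ t) :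
    (expMeasure lam₁).prod (expMeasure lam₀) {p : ℝ × ℝ | p.1 + p.2 > t}
      = ENNReal.ofReal (lam₁ * Real.exp (-(lam₀ * t)) *
          ((Real.exp ((lam₀ - lam₁) * t) - 1) / (lam₀ - lam₁)) + Real.exp (-(lam₁ * t))) := by
  have h1' : 0 < lam₁ := h0.trans h1
  have h1' : 0 < lam₁ := h0.trans h1
  haveI := isProbabilityMeasure_expMeasure h0
  haveI := isProbabilityMeasure_expMeasure h1'
  have hs : MeasurableSet {p : ℝ × ℝ | p.1 + p.2 > t} :=
    measurableSet_lt measurable_const (measurable_fst.add measurable_snd)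
  rw [Measure.prod_apply hs]
  have hpre : ∀ x : ℝ, (Prod.mk x ⁻¹' {p : ℝ × ℝ | p.1 + p.2 > t}) = Set.Ioi (t - x) := by
    intro x; ext y; simp [Set.mem_Ioi, sub_lt_iff_lt_add']
  have hint : ∀ x : ℝ, expMeasure lam₀ (Prod.mk x ⁻¹' {p : ℝ × ℝ | p.1 + p.2 > t})
      = ENNReal.ofReal (Real.exp (-(lam₀ * max (t - x) 0))) := by
    intro x; rw [hpre x, expMeasure_Ioi h0]
  simp_rw [hint]
  have hpdfmeas : Measurable (exponentialPDF lam₁) :=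
    (measurable_exponentialPDFReal lam₁).ennreal_ofReal
  rw [show expMeasure lam₁ = volume.withDensity (exponentialPDF lam₁) from rfl]
  rw [lintegral_withDensity_eq_lintegral_mul _ hpdfmeas
    (by fun_prop : Measurable fun x => ENNReal.ofReal (Real.exp (-(lam₀ * max (t - x) 0))))]
  simp only [Pi.mul_apply]
  have hsplit := lintegral_add_compl (μ := volume)
    (fun x => exponentialPDF lam₁ x * ENNReal.ofReal (Real.exp (-(lam₀ * max (t - x) 0))))
    (measurableSet_Iio (a := (0:ℝ)))
  rw [compl_Iio] at hsplit
  rw [← hsplit]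
  have hIio : ∫⁻ x in Set.Iio (0:ℝ),
      exponentialPDF lam₁ x * ENNReal.ofReal (Real.exp (-(lam₀ * max (t - x) 0))) = 0 := by
    rw [setLIntegral_congr_fun measurableSet_Iio
      (fun x (hx : x < 0) => ?_), lintegral_zero]
    rw [exponentialPDF_of_neg hx, zero_mul]
  rw [hIio, zero_add, ← Set.Icc_union_Ioi_eq_Ici ht,
    lintegral_union measurableSet_Ioi (by rw [Set.disjoint_left]; rintro x ⟨-, hxb⟩ hxc; exact absurd hxc (not_lt.mpr hxb))]
  have hIoi : ∫⁻ x in Set.Ioi t,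
      exponentialPDF lam₁ x * ENNReal.ofReal (Real.exp (-(lam₀ * max (t - x) 0)))
      = ENNReal.ofReal (Real.exp (-(lam₁ * t))) := by
    rw [setLIntegral_congr_fun measurableSet_Ioi
      (fun x (hx : t < x) => ?_)]
    · rw [← withDensity_apply _ measurableSet_Ioi]
      rw [show volume.withDensity (exponentialPDF lam₁) = expMeasure lam₁ from rfl,
        expMeasure_Ioi h1', max_eq_left ht]
    · rw [max_eq_right (by linarith), mul_zero, neg_zero, Real.exp_zero,
        ENNReal.ofReal_one, mul_one]
  have hIcc : ∫⁻ x in Set.Icc 0 t,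
      exponentialPDF lam₁ x * ENNReal.ofReal (Real.exp (-(lam₀ * max (t - x) 0)))
      = ENNReal.ofReal (lam₁ * Real.exp (-(lam₀ * t)) *
          ((Real.exp ((lam₀ - lam₁) * t) - 1) / (lam₀ - lam₁))) := by
    rw [setLIntegral_congr_fun measurableSet_Icc
      (fun x hx => ?_)
      (g := fun x => ENNReal.ofReal (lam₁ * Real.exp (-(lam₁ * x)) * Real.exp (-(lam₀ * (t - x)))))]
    · rw [← ofReal_integral_eq_lintegral_ofReal]
      · congr 1
        rw [MeasureTheory.integral_Icc_eq_integral_Ioc, ← intervalIntegral.integral_of_le ht]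
        have hfun : ∀ x : ℝ, lam₁ * Real.exp (-(lam₁ * x)) * Real.exp (-(lam₀ * (t - x)))
            = (lam₁ * Real.exp (-(lam₀ * t))) * Real.exp ((lam₀ - lam₁) * x) := by
          intro x
          rw [mul_assoc, ← Real.exp_add, mul_assoc, ← Real.exp_add,
            show -(lam₁ * x) + -(lam₀ * (t - x)) = -(lam₀ * t) + (lam₀ - lam₁) * x by ring]
        simp_rw [hfun]
        rw [intervalIntegral.integral_const_mul,
          integral_exp_mul' _ (sub_ne_zero.mpr h1.ne) 0 t, mul_zero, Real.exp_zero]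
      · exact (Continuous.integrableOn_Icc (by continuity))
      · filter_upwards with x
        exact mul_nonneg (mul_nonneg h1'.le (Real.exp_nonneg _)) (Real.exp_nonneg _)
    · obtain ⟨hx0, hxt⟩ := hx
      rw [exponentialPDF_of_nonneg hx0, max_eq_left (by linarith),
        ← ENNReal.ofReal_mul (by positivity)]
  have hnn : 0 ≤ lam₁ * Real.exp (-(lam₀ * t)) *
      ((Real.exp ((lam₀ - lam₁) * t) - 1) / (lam₀ - lam₁)) := by
    apply mul_nonneg (mul_nonneg h1'.le (Real.exp_nonneg _))
    apply div_nonneg_of_nonpos _ (by linarith)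
    have : Real.exp ((lam₀ - lam₁) * t) ≤ 1 := by
      rw [Real.exp_le_one_iff]; nlinarith
    linarith
  rw [hIcc, hIoi, ← ENNReal.ofReal_add hnn (Real.exp_nonneg _)]

end Helpers

section Main
open Set Real ProbabilityTheory
open scoped ENNReal

/-- If `Θ₁ ~ Exp(λ₁)`, `Θ₀ ~ Exp(λ₀)` and `B ~ Ber(1 − λ₀/λ₁)` are independent
(`0 < λ₀ < λ₁`), then `Γ₀ = Θ₁ + B·Θ₀` is exponential with rate `λ₀`.
Laws are expressed via tail probabilities `P(X > t) = e^{−λ t}` for `t ≥ 0`. -/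
theorem stmt13 {Ω : Type*} [MeasurableSpace Ω] (μ : Measure Ω)
    [IsProbabilityMeasure μ]
    (lam₀ lam₁ : ℝ) (h0 : 0 < lam₀) (h1 : lam₀ < lam₁)
    (Θ₁ Θ₀ B : Ω → ℝ)
    (hmeas₁ : Measurable Θ₁) (hmeas₀ : Measurable Θ₀) (hmeasB : Measurable B)
    (hindep : ProbabilityTheory.iIndepFun ![Θ₁, Θ₀, B] μ)
    (hlaw₁ : ∀ t : ℝ, 0 ≤ t → μ {ω | Θ₁ ω > t} = ENNReal.ofReal (Real.exp (-lam₁ * t)))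
    (hlaw₀ : ∀ t : ℝ, 0 ≤ t → μ {ω | Θ₀ ω > t} = ENNReal.ofReal (Real.exp (-lam₀ * t)))
    (hB01 : ∀ ω, B ω = 0 ∨ B ω = 1)
    (hBlaw : μ {ω | B ω = 1} = ENNReal.ofReal (1 - lam₀ / lam₁)) :
    ∀ t : ℝ, 0 ≤ t →
      μ {ω | Θ₁ ω + B ω * Θ₀ ω > t} = ENNReal.ofReal (Real.exp (-lam₀ * t)) := by
  intro t ht
  have h1' : 0 < lam₁ := h0.trans h1
  have hmeasv : ∀ i, Measurable (![Θ₁, Θ₀, B] i) := by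
    intro i; fin_cases i <;> simpa
  have hI01 : IndepFun Θ₁ Θ₀ μ := by
    have := hindep.indepFun (i := 0) (j := 1) (by decide)
    simpa using this
  have hIpB : IndepFun (fun ω => (Θ₁ ω, Θ₀ ω)) B μ := by
    have := hindep.indepFun_prodMk hmeasv 0 1 2 (by decide) (by decide)
    simpa using this
  have hI1B : IndepFun Θ₁ B μ := by
    have := hindep.indepFun (i := 0) (j := 2) (by decide)
    simpa using this
  have hs : MeasurableSet {p : ℝ × ℝ | p.1 + p.2 > t} :=
    measurableSet_lt measurable_const (measurable_fst.add measurable_snd)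
  set A := B ⁻¹' {1} with hA
  have hAmeas : MeasurableSet A := hmeasB (measurableSet_singleton 1)
  have hAc : Aᶜ = B ⁻¹' {0} := by
    ext ω; rcases hB01 ω with h | h <;> simp [hA, h]
  have hfrac0 : 0 ≤ lam₀ / lam₁ := by positivity
  have hfrac1 : lam₀ / lam₁ ≤ 1 := by rw [div_le_one h1']; linarith
  have hμA : μ A = ENNReal.ofReal (1 - lam₀ / lam₁) := hBlaw
  have hone : ENNReal.ofReal (1 - lam₀ / lam₁) + ENNReal.ofReal (lam₀ / lam₁) = 1 := by
    rw [← ENNReal.ofReal_add (by linarith) hfrac0]; norm_num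
  have hμAc : μ Aᶜ = ENNReal.ofReal (lam₀ / lam₁) := by
    rw [measure_compl hAmeas (measure_ne_top _ _), measure_univ, hμA, ← hone,
      ENNReal.add_sub_cancel_left (by finiteness)]
  -- decompose the event
  have hset : {ω | Θ₁ ω + B ω * Θ₀ ω > t}
      = (Θ₁ ⁻¹' Set.Ioi t ∩ Aᶜ)
        ∪ ((fun ω => (Θ₁ ω, Θ₀ ω)) ⁻¹' {p : ℝ × ℝ | p.1 + p.2 > t} ∩ A) := by
    ext ω
    rcases hB01 ω with h | h <;>
      simp [hA, h, Set.mem_Ioi, and_comm]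
  rw [hset, measure_union (Disjoint.mono Set.inter_subset_right Set.inter_subset_right
      disjoint_compl_left) (((hmeas₁.prodMk hmeas₀) hs).inter hAmeas)]
  -- first piece
  have hp1 : μ (Θ₁ ⁻¹' Set.Ioi t ∩ Aᶜ)
      = ENNReal.ofReal (Real.exp (-(lam₁ * t))) * ENNReal.ofReal (lam₀ / lam₁) := by
    rw [hAc, hI1B.measure_inter_preimage_eq_mul _ _ measurableSet_Ioi
      (measurableSet_singleton 0), ← hAc, hμAc]
    congr 1
    have := hlaw₁ t ht
    rw [neg_mul] at this
    exact this
  -- second piece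
  have hmap₁ : μ.map Θ₁ = expMeasure lam₁ := map_eq_expMeasure μ h1' hmeas₁ hlaw₁
  have hmap₀ : μ.map Θ₀ = expMeasure lam₀ := map_eq_expMeasure μ h0 hmeas₀ hlaw₀
  have hp2 : μ ((fun ω => (Θ₁ ω, Θ₀ ω)) ⁻¹' {p : ℝ × ℝ | p.1 + p.2 > t} ∩ A)
      = ENNReal.ofReal (lam₁ * Real.exp (-(lam₀ * t)) *
          ((Real.exp ((lam₀ - lam₁) * t) - 1) / (lam₀ - lam₁)) + Real.exp (-(lam₁ * t)))
        * ENNReal.ofReal (1 - lam₀ / lam₁) := by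
    rw [hIpB.measure_inter_preimage_eq_mul _ _ hs (measurableSet_singleton 1), ← hA, hμA]
    congr 1
    rw [← Measure.map_apply (hmeas₁.prodMk hmeas₀) hs,
      (ProbabilityTheory.indepFun_iff_map_prod_eq_prod_map_map hmeas₁.aemeasurable
        hmeas₀.aemeasurable).mp hI01, hmap₁, hmap₀]
    exact conv_tail h0 h1 ht
  rw [hp1, hp2,
    ← ENNReal.ofReal_mul (Real.exp_nonneg _),
    ← ENNReal.ofReal_mul (by
      have hA1 : Real.exp ((lam₀ - lam₁) * t) ≤ 1 := by
        rw [Real.exp_le_one_iff]; nlinarith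
      have : 0 ≤ (Real.exp ((lam₀ - lam₁) * t) - 1) / (lam₀ - lam₁) :=
        div_nonneg_of_nonpos (by linarith) (by linarith)
      positivity),
    ← ENNReal.ofReal_add (by positivity) (by
      have hA1 : Real.exp ((lam₀ - lam₁) * t) ≤ 1 := by
        rw [Real.exp_le_one_iff]; nlinarith
      have h2 : 0 ≤ (Real.exp ((lam₀ - lam₁) * t) - 1) / (lam₀ - lam₁) :=
        div_nonneg_of_nonpos (by linarith) (by linarith)
      have h3 : 0 ≤ 1 - lam₀ / lam₁ := by linarith
      positivity)]
  congr 1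
  have hE : Real.exp ((lam₀ - lam₁) * t)
      = Real.exp (-(lam₁ * t)) * (Real.exp (-(lam₀ * t)))⁻¹ := by
    rw [← Real.exp_neg, ← Real.exp_add]; congr 1; ring
  rw [neg_mul, hE]
  have hEne : Real.exp (-(lam₀ * t)) ≠ 0 := (Real.exp_pos _).ne'
  have hd : lam₀ - lam₁ ≠ 0 := by linarith
  field_simp
  ring

end Main
end
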